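/- For 0 < |z| < 1, dP_{n,Zag}(z) = P_{n-1,Zag}(z) d i arg z + (-1)^n (log^{n-1}|z|/(n-1)!) π_{n-1} d log(1 - z), where P_{n,Zag}(z) = π_{n-1}(∑_{k=0}^{n-1} (-log|z|)^k/k! Li_{n-k}(z)). -/

import Mathlib

/-!
Write `S_n = ∑_{k<n} ((-log|z|)^k / k!) Li_{n-k}(z)`, so that `P_{n,Zag} = π_{n-1} S_n`.
Since `d Li_{j+1} = Li_j d log z` and `d((-log|z|)^k / k!) = -((-log|z|)^{k-1} / (k-1)!) d log|z|`,
the Leibniz rule telescopes to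
`dS_n = S_{n-1} (d log z - d log|z|) + ((-log|z|)^{n-1} / (n-1)!) Li_0(z) d log z`,
and `d log z - d log|z| = d i arg z`, `Li_0(z) d log z = -d log(1 - z)`.
Applying the `ℝ`-linear `π_{n-1}` gives the formula: multiplication by the purely imaginary
`d i arg z` turns `π_{n-1}` into `π_{n-2}`.
-/

/-- The polylogarithm `Li k z = ∑_{m ≥ 1} z^m / m^k`. -/
noncomputable def Li (k : ℕ) (z : ℂ) : ℂ := ∑' m : ℕ+, z ^ (m : ℕ) / ((m : ℕ) : ℂ) ^ k

/-- The projection `π_m : ℂ = ℝ(m) ⊕ ℝ(m+1) → ℝ(m)`, where `ℝ(m) = (2πi)^m ℝ`: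
the real part for `m` even, `i` times the imaginary part for `m` odd. -/
noncomputable def PiProj (m : ℕ) (w : ℂ) : ℂ :=
  if Even m then (w.re : ℂ) else (w.im : ℂ) * Complex.I

/-- Zagier's single-valued polylogarithm
`P_{n,Zag}(z) = π_{n-1}(∑_{k=0}^{n-1} ((-log|z|)^k / k!) Li_{n-k}(z))`. -/
noncomputable def PZag (n : ℕ) (z : ℂ) : ℂ :=
  PiProj (n - 1) (∑ k ∈ Finset.range n,
    (((-Real.log ‖z‖) ^ k / (Nat.factorial k) : ℝ) : ℂ) * Li (n - k) z)

open Complex Finset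

section Polylog

variable {z : ℂ}

lemma summable_Li (k : ℕ) (hz : ‖z‖ < 1) :
    Summable fun m : ℕ+ => z ^ (m : ℕ) / ((m : ℕ) : ℂ) ^ k := by
  refine .of_norm_bounded (g := fun m : ℕ+ => ‖z‖ ^ (m : ℕ))
    (summable_pnat_iff_summable_nat.mpr (summable_geometric_of_lt_one (norm_nonneg z) hz))
    fun m => ?_
  rw [norm_div, norm_pow, norm_pow, Complex.norm_natCast]
  exact div_le_self (by positivity) (one_le_pow₀ (by exact_mod_cast m.pos))

lemma Li_zero (hz : ‖z‖ < 1) : Li 0 z = z / (1 - z) := by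
  simp_rw [Li, pow_zero, div_one, tsum_pnat_eq_tsum_succ (f := fun m => z ^ m), pow_succ',
    tsum_mul_left, tsum_geometric_of_norm_lt_one hz, div_eq_mul_inv]

lemma hasDerivAt_Li_succ (k : ℕ) (h0 : z ≠ 0) (hz : ‖z‖ < 1) :
    HasDerivAt (Li (k + 1)) (Li k z / z) z := by
  obtain ⟨r, hzr, hr1⟩ := exists_between hz
  have hu : Summable fun m : ℕ+ => r ^ ((m : ℕ) - 1) := by
    refine summable_pnat_iff_summable_succ (f := fun n => r ^ (n - 1)) |>.mpr ?_
    simpa using summable_geometric_of_lt_one ((norm_nonneg z).trans hzr.le) hr1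
  have hderiv : HasDerivAt (fun y => ∑' m : ℕ+, y ^ (m : ℕ) / ((m : ℕ) : ℂ) ^ (k + 1))
      (∑' m : ℕ+, z ^ ((m : ℕ) - 1) / ((m : ℕ) : ℂ) ^ k) z := by
    refine hasDerivAt_tsum_of_isPreconnected (t := Metric.ball (0 : ℂ) r) (y₀ := 0)
      (g := fun (m : ℕ+) y => y ^ (m : ℕ) / ((m : ℕ) : ℂ) ^ (k + 1))
      (g' := fun (m : ℕ+) y => y ^ ((m : ℕ) - 1) / ((m : ℕ) : ℂ) ^ k)
      hu Metric.isOpen_ball (convex_ball 0 r).isPreconnected (fun m y _ => ?_) (fun m y hy => ?_)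
      (Metric.mem_ball_self (by linarith [norm_nonneg z])) (summable_Li _ (by simp))
      (mem_ball_zero_iff.mpr hzr)
    · refine ((hasDerivAt_pow (m : ℕ) y).div_const _).congr_deriv ?_
      have : ((m : ℕ) : ℂ) ≠ 0 := by exact_mod_cast m.ne_zero
      rw [pow_succ]
      field_simp
    · rw [mem_ball_zero_iff] at hy
      rw [norm_div, norm_pow, norm_pow, Complex.norm_natCast]
      calc ‖y‖ ^ ((m : ℕ) - 1) / ((m : ℕ) : ℝ) ^ k ≤ ‖y‖ ^ ((m : ℕ) - 1) :=
            div_le_self (by positivity) (one_le_pow₀ (by exact_mod_cast m.pos))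
        _ ≤ r ^ ((m : ℕ) - 1) := by gcongr
  refine hderiv.congr_deriv ?_
  rw [Li, ← tsum_div_const]
  congr 1 with m
  rw [pow_sub₀ _ h0 m.pos, pow_one]
  ring

end Polylog

/- The 1-forms `d log z`, `d log|z|`, `d i arg z` and `d log(1 - z)` at the point `z`,
as `ℝ`-linear maps sending a tangent vector `v` to their (complex) value on it. -/

noncomputable def dLog (z : ℂ) : ℂ →L[ℝ] ℂ := z⁻¹ • ContinuousLinearMap.id ℝ ℂ

noncomputable def dLogAbs (z : ℂ) : ℂ →L[ℝ] ℂ := ofRealCLM ∘L reCLM ∘L dLog z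

noncomputable def dIArg (z : ℂ) : ℂ →L[ℝ] ℂ := I • (ofRealCLM ∘L imCLM ∘L dLog z)

noncomputable def dLogOneSub (z : ℂ) : ℂ →L[ℝ] ℂ :=
  -(1 - z)⁻¹ • ContinuousLinearMap.id ℝ ℂ

@[simp] lemma dLog_apply (z v : ℂ) : dLog z v = v / z := by
  simp [dLog, div_eq_inv_mul]

@[simp] lemma dLogAbs_apply (z v : ℂ) : dLogAbs z v = ((v / z).re : ℂ) := by
  simp [dLogAbs]

@[simp] lemma dIArg_apply (z v : ℂ) : dIArg z v = I * ((v / z).im : ℂ) := by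
  simp [dIArg]

@[simp] lemma dLogOneSub_apply (z v : ℂ) : dLogOneSub z v = -v / (1 - z) := by
  simp [dLogOneSub, div_eq_inv_mul]

lemma dLog_sub_dLogAbs (z : ℂ) : dLog z - dLogAbs z = dIArg z := by
  ext1 v
  simp only [sub_apply, dLog_apply, dLogAbs_apply, dIArg_apply]
  rw [sub_eq_iff_eq_add', mul_comm, re_add_im]

noncomputable def PZagSum (n : ℕ) (w : ℂ) : ℂ :=
  ∑ k ∈ range n, ((-Real.log ‖w‖ : ℝ) : ℂ) ^ k / k.factorial * Li (n - k) w

lemma PZag_eq_PiProj_PZagSum (n : ℕ) (w : ℂ) : PZag n w = PiProj (n - 1) (PZagSum n w) := by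
  simp [PZag, PZagSum]

section Derivatives

variable {z : ℂ}

lemma dLogOneSub_eq_neg_Li_zero_smul_dLog (h0 : z ≠ 0) (hz : ‖z‖ < 1) :
    dLogOneSub z = -(Li 0 z • dLog z) := by
  have h1 : 1 - z ≠ 0 := sub_ne_zero.mpr (by rintro rfl; simp at hz)
  ext1 v
  simp only [dLogOneSub_apply, neg_apply, smul_apply, dLog_apply, smul_eq_mul, Li_zero hz]
  field_simp

lemma hasFDerivAt_log_norm (h0 : z ≠ 0) :
    HasFDerivAt (fun w : ℂ => Real.log ‖w‖) (reCLM ∘L dLog z) z := by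
  have h := ((hasStrictFDerivAt_norm_sq z).hasFDerivAt.log (by positivity)).const_mul (1 / 2 : ℝ)
  have hlog : (fun w : ℂ => Real.log ‖w‖) = fun w => 1 / 2 * Real.log (‖w‖ ^ 2) := by
    funext w
    rw [Real.log_pow]
    ring
  rw [hlog]
  refine h.congr_fderiv ?_
  ext1 v
  simp [Complex.inner, Complex.div_re, Complex.sq_norm]
  ring

lemma hasFDerivAt_Li_succ (k : ℕ) (h0 : z ≠ 0) (hz : ‖z‖ < 1) :
    HasFDerivAt (Li (k + 1)) (Li k z • dLog z) z :=
  ((hasDerivAt_Li_succ k h0 hz).hasFDerivAt.restrictScalars ℝ).congr_fderiv <| by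
    ext1 v; simp; ring

lemma hasFDerivAt_ofReal_neg_log_norm (h0 : z ≠ 0) :
    HasFDerivAt (fun w : ℂ => ((-Real.log ‖w‖ : ℝ) : ℂ)) (-dLogAbs z) z :=
  (ofRealCLM.hasFDerivAt.comp z (hasFDerivAt_log_norm h0).neg).congr_fderiv <| by
    ext1 v; simp

lemma hasFDerivAt_PZagSum_succ (m : ℕ) (h0 : z ≠ 0) (hz : ‖z‖ < 1) :
    HasFDerivAt (PZagSum (m + 1))
      (PZagSum m z • dIArg z
        - ((-Real.log ‖z‖) ^ m / m.factorial : ℝ) • dLogOneSub z) z := by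
  set ℓ : ℂ → ℂ := fun w => ((-Real.log ‖w‖ : ℝ) : ℂ)
  have hterm : ∀ k ∈ range (m + 1),
      HasFDerivAt (fun w => ℓ w ^ k / k.factorial * Li (m - k + 1) w)
        ((ℓ z ^ k / k.factorial) • Li (m - k) z • dLog z
          + Li (m - k + 1) z • ((k * ℓ z ^ (k - 1) / k.factorial) • -dLogAbs z)) z :=
    fun k _ => (((hasDerivAt_pow k (ℓ z)).div_const _).comp_hasFDerivAt z
      (hasFDerivAt_ofReal_neg_log_norm h0)).mul (hasFDerivAt_Li_succ _ h0 hz)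
  have hsum : PZagSum (m + 1)
      = fun w => ∑ k ∈ range (m + 1), ℓ w ^ k / k.factorial * Li (m - k + 1) w := by
    funext w
    refine sum_congr rfl fun k hk => ?_
    rw [show m + 1 - k = m - k + 1 by rw [mem_range] at hk; omega]
  rw [hsum]
  refine (HasFDerivAt.fun_sum hterm).congr_fderiv ?_
  have hlog : ∑ k ∈ range m, (ℓ z ^ k / k.factorial) • Li (m - k) z • dLog z
      = PZagSum m z • dLog z := by
    rw [PZagSum, sum_smul (M := ℂ →L[ℝ] ℂ)]
    simp only [smul_smul]
    rfl
  have habs : ∑ k ∈ range m, Li (m - (k + 1) + 1) z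
        • (((k + 1 : ℕ) * ℓ z ^ (k + 1 - 1) / (k + 1).factorial : ℂ) • -dLogAbs z)
      = -(PZagSum m z • dLogAbs z) := by
    rw [PZagSum, sum_smul (M := ℂ →L[ℝ] ℂ), ← sum_neg_distrib]
    refine sum_congr rfl fun k hk => ?_
    rw [show m - (k + 1) + 1 = m - k by rw [mem_range] at hk; omega, Nat.factorial_succ,
      Nat.add_sub_cancel, Nat.cast_mul, mul_div_mul_left _ _ (Nat.cast_ne_zero.mpr k.succ_ne_zero)]
    simp only [ℓ]
    module
  rw [sum_add_distrib, sum_range_succ, sum_range_succ', hlog, habs, ← dLog_sub_dLogAbs]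
  simp only [ℓ, Nat.sub_self, CharP.cast_eq_zero, zero_mul, zero_div,
    dLogOneSub_eq_neg_Li_zero_smul_dLog h0 hz]
  module

end Derivatives

noncomputable def piProjCLM (m : ℕ) : ℂ →L[ℝ] ℂ :=
  if Even m then ofRealCLM ∘L reCLM else imCLM.smulRight I

@[simp] lemma piProjCLM_apply (m : ℕ) (w : ℂ) : piProjCLM m w = PiProj m w := by
  by_cases h : Even m <;> simp [piProjCLM, PiProj, h, real_smul]

lemma PiProj_succ_mul_I_mul_ofReal (m : ℕ) (w : ℂ) (t : ℝ) :
    PiProj (m + 1) (w * (I * t)) = PiProj m w * (I * t) := by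
  rcases Nat.even_or_odd m with h | h
  · simp only [PiProj, h, Nat.not_even_iff_odd.mpr h.add_one, if_true, if_false]
    apply Complex.ext <;> simp
  · simp only [PiProj, h.add_one, Nat.not_even_iff_odd.mpr h, if_true, if_false]
    apply Complex.ext <;> simp

/-- `dP_{n,Zag}(z) = P_{n-1,Zag}(z) d i arg z + (-1)^n (log^{n-1}|z|/(n-1)!) π_{n-1} d log(1-z)`
on the punctured unit disc, as an identity of real 1-forms: here `d i arg z` evaluated on the
tangent vector `v` is `i Im(v/z)` and `d log(1-z)` evaluated on `v` is `-v/(1-z)`. -/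
theorem dPZag (n : ℕ) (hn : 2 ≤ n) (z : ℂ) (h0 : z ≠ 0) (h1 : ‖z‖ < 1) (v : ℂ) :
    fderiv ℝ (PZag n) z v
      = PZag (n - 1) z * (Complex.I * (((v / z).im : ℝ) : ℂ))
        + (-1 : ℂ) ^ n * (((Real.log ‖z‖) ^ (n - 1)
            / (Nat.factorial (n - 1)) : ℝ) : ℂ) * PiProj (n - 1) (-v / (1 - z)) := by
  obtain ⟨m, rfl⟩ : ∃ m, n = m + 2 := ⟨n - 2, by omega⟩
  have hPZag : PZag (m + 2) = piProjCLM (m + 1) ∘ PZagSum (m + 2) :=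
    funext fun w => by simp [PZag_eq_PiProj_PZagSum]
  have hD := (piProjCLM (m + 1)).hasFDerivAt.comp z (hasFDerivAt_PZagSum_succ (m + 1) h0 h1)
  rw [hPZag, hD.fderiv]
  simp only [ContinuousLinearMap.comp_apply, sub_apply, smul_apply, dIArg_apply, dLogOneSub_apply,
    map_sub, map_smul, piProjCLM_apply, smul_eq_mul, PiProj_succ_mul_I_mul_ofReal]
  rw [PZag_eq_PiProj_PZagSum, real_smul]
  push_cast
  ring
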